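/- arXiv:2005.14057 — 2 statements merged into one kernel-verified Lean document; each statement's English description precedes it below -/
import Mathlib

section
/- Let y = m + u with m, u ∈ ℝ^T, let λ > 0 and c > 1, and let β̂ ∈ ℝ^p be any minimizer over b ∈ ℝ^p of ‖y − Xb‖_T² + 2λΩ(b). Assume the dual-norm bound |⟨u, Xb⟩|/T ≤ (λ/c) Ω(b) holds for all b ∈ ℝ^p. Then for every β ∈ ℝ^p, writing Δ = β̂ − β, the basic prediction inequality holds: ‖XΔ‖_T² ≤ (1/c) λ Ω(Δ) + ‖XΔ‖_T · ‖m − Xβ‖_T + λ (Ω(β) − Ω(β̂)). -/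
open Finset

noncomputable section

open scoped Classical

/-- ℓ1 norm on ℝ^p. -/
def l1 {p : ℕ} (b : Fin p → ℝ) : ℝ := ∑ i, |b i|

/-- ℓ2 norm on ℝ^p. -/
def l2 {p : ℕ} (b : Fin p → ℝ) : ℝ := Real.sqrt (∑ i, (b i) ^ 2)

/-- `restr b S` keeps the coordinates of `b` on `S` and puts zeros elsewhere. -/
def restr {p : ℕ} (b : Fin p → ℝ) (S : Finset (Fin p)) : Fin p → ℝ :=
  fun i => if i ∈ S then b i else 0

/-- `G` is a partition of `{1,…,p}` into nonempty pairwise disjoint groups. -/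
def IsPartition {p : ℕ} (G : Finset (Finset (Fin p))) : Prop :=
  (∀ g ∈ G, g.Nonempty) ∧ (∀ g ∈ G, ∀ g' ∈ G, g ≠ g' → Disjoint g g') ∧
    (∀ i : Fin p, ∃ g ∈ G, i ∈ g)

/-- The sg-LASSO penalty `Ω(b) = α|b|₁ + (1−α)∑_{G∈𝒢}|b_G|₂`. -/
def sgl {p : ℕ} (α : ℝ) (G : Finset (Finset (Fin p))) (b : Fin p → ℝ) : ℝ :=
  α * l1 b + (1 - α) * ∑ g ∈ G, l2 (restr b g)

/-- Empirical squared norm `‖v‖_T² = |v|₂²/T`. -/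
def normT2 {T : ℕ} (v : Fin T → ℝ) : ℝ := (∑ t, (v t) ^ 2) / T

/-- Empirical norm `‖v‖_T = √(|v|₂²/T)`. -/
def normT {T : ℕ} (v : Fin T → ℝ) : ℝ := Real.sqrt ((∑ t, (v t) ^ 2) / T)

lemma l2_eq_norm {p : ℕ} (b : Fin p → ℝ) :
    l2 b = ‖(WithLp.equiv 2 (Fin p → ℝ)).symm b‖ := by
  rw [EuclideanSpace.norm_eq]
  simp [l2, Real.norm_eq_abs, sq_abs]

lemma l2_add_le {p : ℕ} (f g : Fin p → ℝ) : l2 (f + g) ≤ l2 f + l2 g := by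
  simp only [l2_eq_norm]
  rw [show (WithLp.equiv 2 (Fin p → ℝ)).symm (f + g)
      = (WithLp.equiv 2 (Fin p → ℝ)).symm f + (WithLp.equiv 2 (Fin p → ℝ)).symm g from rfl]
  exact norm_add_le _ _

lemma l2_smul {p : ℕ} (t : ℝ) (f : Fin p → ℝ) : l2 (t • f) = |t| * l2 f := by
  simp only [l2_eq_norm]
  rw [show (WithLp.equiv 2 (Fin p → ℝ)).symm (t • f)
      = t • (WithLp.equiv 2 (Fin p → ℝ)).symm f from rfl]
  rw [norm_smul, Real.norm_eq_abs]

lemma l1_add_le {p : ℕ} (f g : Fin p → ℝ) : l1 (f + g) ≤ l1 f + l1 g := by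
  rw [l1, l1, l1, ← Finset.sum_add_distrib]
  exact Finset.sum_le_sum fun i _ => abs_add_le _ _

lemma l1_smul {p : ℕ} (t : ℝ) (f : Fin p → ℝ) : l1 (t • f) = |t| * l1 f := by
  rw [l1, l1, Finset.mul_sum]
  exact Finset.sum_congr rfl fun i _ => by simp [abs_mul]

lemma restr_add {p : ℕ} (f g : Fin p → ℝ) (S : Finset (Fin p)) :
    restr (f + g) S = restr f S + restr g S := by
  funext i; simp only [restr, Pi.add_apply]; split <;> simp

lemma restr_smul {p : ℕ} (t : ℝ) (f : Fin p → ℝ) (S : Finset (Fin p)) :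
    restr (t • f) S = t • restr f S := by
   funext i; simp only [restr, Pi.smul_apply, smul_eq_mul]; split <;> simp

lemma sgl_combo {p : ℕ} (α : ℝ) (hα0 : 0 ≤ α) (hα1 : α ≤ 1)
    (G : Finset (Finset (Fin p))) (x y : Fin p → ℝ) (θ : ℝ) (h0 : 0 ≤ θ) (h1 : θ ≤ 1) :
    sgl α G ((1 - θ) • x + θ • y) ≤ (1 - θ) * sgl α G x + θ * sgl α G y := by
  have h1' : 0 ≤ 1 - θ := by linarith
  have hl1 : l1 ((1 - θ) • x + θ • y) ≤ (1 - θ) * l1 x + θ * l1 y := by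
    calc l1 ((1 - θ) • x + θ • y) ≤ l1 ((1 - θ) • x) + l1 (θ • y) := l1_add_le _ _
      _ = (1 - θ) * l1 x + θ * l1 y := by
          rw [l1_smul, l1_smul, abs_of_nonneg h0, abs_of_nonneg h1']
  have hl2 : ∑ g ∈ G, l2 (restr ((1 - θ) • x + θ • y) g)
      ≤ (1 - θ) * (∑ g ∈ G, l2 (restr x g)) + θ * (∑ g ∈ G, l2 (restr y g)) := by
    rw [Finset.mul_sum, Finset.mul_sum, ← Finset.sum_add_distrib]
    refine Finset.sum_le_sum fun g _ => ?_
    rw [restr_add, restr_smul, restr_smul]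
    calc l2 ((1 - θ) • restr x g + θ • restr y g)
        ≤ l2 ((1 - θ) • restr x g) + l2 (θ • restr y g) := l2_add_le _ _
      _ = (1 - θ) * l2 (restr x g) + θ * l2 (restr y g) := by
          rw [l2_smul, l2_smul, abs_of_nonneg h0, abs_of_nonneg h1']
  have hα1' : 0 ≤ 1 - α := by linarith
  calc sgl α G ((1 - θ) • x + θ • y)
      ≤ α * ((1 - θ) * l1 x + θ * l1 y)
        + (1 - α) * ((1 - θ) * (∑ g ∈ G, l2 (restr x g)) + θ * (∑ g ∈ G, l2 (restr y g))) := by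
        exact add_le_add (mul_le_mul_of_nonneg_left hl1 hα0) (mul_le_mul_of_nonneg_left hl2 hα1')
    _ = (1 - θ) * sgl α G x + θ * sgl α G y := by rw [sgl, sgl]; ring

lemma cs_sum {T : ℕ} (v r : Fin T → ℝ) :
    ∑ t, v t * r t ≤ Real.sqrt (∑ t, (v t) ^ 2) * Real.sqrt (∑ t, (r t) ^ 2) := by
  have h := Finset.sum_mul_sq_le_sq_mul_sq Finset.univ v r
  calc ∑ t, v t * r t ≤ |∑ t, v t * r t| := le_abs_self _
    _ = Real.sqrt ((∑ t, v t * r t) ^ 2) := (Real.sqrt_sq_eq_abs _).symm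
    _ ≤ Real.sqrt ((∑ t, (v t) ^ 2) * ∑ t, (r t) ^ 2) := Real.sqrt_le_sqrt h
    _ = _ := Real.sqrt_mul (by positivity) _


lemma nonneg_of_small_slack (K a : ℝ) (ha : 0 ≤ a)
    (h : ∀ θ : ℝ, 0 < θ → θ ≤ 1 → 0 ≤ K + θ * a / 2) : 0 ≤ K := by
  by_contra h'
  push_neg at h'
  have hden : (0:ℝ) < a + 1 := by linarith
  have hθ0 : 0 < min 1 (-K / (a + 1)) := lt_min one_pos (div_pos (by linarith) hden)
  have h2 := h _ hθ0 (min_le_left _ _)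
  have hle : min 1 (-K / (a + 1)) ≤ -K / (a + 1) := min_le_right _ _
  have h3 := mul_le_mul_of_nonneg_right hle (le_of_lt hden)
  rw [div_mul_cancel₀ _ (ne_of_gt hden)] at h3
  nlinarith


/-- basic prediction inequality for the sg-LASSO. With `y = m+u`,
`λ > 0`, `c > 1`, a minimizer `β̂`, and the dual-norm bound
`|⟨u,Xb⟩|/T ≤ (λ/c)Ω(b)` for all `b`, for every `β`, with `Δ = β̂ − β`:
`‖XΔ‖_T² ≤ (1/c)λΩ(Δ) + ‖XΔ‖_T‖m − Xβ‖_T + λ(Ω(β) − Ω(β̂))`. -/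
theorem sgLasso_basic_prediction_inequality
    (p T : ℕ) (hp : 1 ≤ p) (hT : 1 ≤ T)
    (α : ℝ) (hα0 : 0 ≤ α) (hα1 : α ≤ 1)
    (G : Finset (Finset (Fin p))) (hG : IsPartition G)
    (X : Matrix (Fin T) (Fin p) ℝ) (m u : Fin T → ℝ)
    (lam c : ℝ) (hlam : 0 < lam) (hc : 1 < c) (βhat : Fin p → ℝ)
    (hmin : ∀ b : Fin p → ℝ,
      normT2 (m + u - X.mulVec βhat) + 2 * lam * sgl α G βhat ≤
        normT2 (m + u - X.mulVec b) + 2 * lam * sgl α G b)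
    (hdual : ∀ b : Fin p → ℝ,
      |∑ t, u t * X.mulVec b t| / T ≤ (lam / c) * sgl α G b)
    (β : Fin p → ℝ) :
    normT (X.mulVec (βhat - β)) ^ 2 ≤
      (1 / c) * lam * sgl α G (βhat - β) +
        normT (X.mulVec (βhat - β)) * normT (m - X.mulVec β) +
          lam * (sgl α G β - sgl α G βhat) := by
  have hT0 : (0 : ℝ) < T := by exact_mod_cast hT
  set v := X.mulVec (βhat - β) with hv
  set w := m + u - X.mulVec βhat with hw
  set r := m - X.mulVec β with hr
  set D := sgl α G β - sgl α G βhat with hD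
  have hvsplit : ∀ t, v t = r t + u t - w t := by
    intro t
    have : v t = X.mulVec βhat t - X.mulVec β t := by
      rw [hv, Matrix.mulVec_sub]; rfl
    rw [this]; simp [hw, hr]; ring
  -- Step A: first-order condition
  have nv2 : normT2 v = (∑ t, (v t) ^ 2) / T := rfl
  have hnv2 : 0 ≤ normT2 v := by rw [nv2]; positivity
  have stepA : ∀ θ : ℝ, 0 < θ → θ ≤ 1 →
      0 ≤ (∑ t, w t * v t) / T + lam * D + θ * normT2 v / 2 := by
    intro θ hθ0 hθ1
    have hb := hmin ((1 - θ) • βhat + θ • β)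
    have hmv : X.mulVec ((1 - θ) • βhat + θ • β) = X.mulVec βhat - θ • v := by
      rw [Matrix.mulVec_add, Matrix.mulVec_smul, Matrix.mulVec_smul, hv, Matrix.mulVec_sub]
      funext t; simp [Pi.smul_apply, smul_eq_mul]; ring
    have harg : m + u - X.mulVec ((1 - θ) • βhat + θ • β) = w + θ • v := by
      rw [hmv]; funext t; simp [hw]; ring
    have hexp : normT2 (w + θ • v) =
        normT2 w + 2 * θ * ((∑ t, w t * v t) / T) + θ ^ 2 * normT2 v := by
      have hs : ∑ t, ((w + θ • v) t) ^ 2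
          = (∑ t, (w t) ^ 2) + 2 * θ * (∑ t, w t * v t) + θ ^ 2 * (∑ t, (v t) ^ 2) := by
        rw [Finset.mul_sum, Finset.mul_sum, ← Finset.sum_add_distrib, ← Finset.sum_add_distrib]
        refine Finset.sum_congr rfl fun t _ => ?_
        simp [Pi.add_apply, Pi.smul_apply, smul_eq_mul]; ring
      rw [normT2, hs, normT2, normT2]; ring
    have hcombo := sgl_combo α hα0 hα1 G βhat β θ (le_of_lt hθ0) hθ1
    rw [harg, hexp] at hb
    have key : 0 ≤ 2 * θ * ((∑ t, w t * v t) / T) + θ ^ 2 * normT2 v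
        + 2 * lam * θ * D := by nlinarith [hb, hcombo]
    have := mul_le_mul_of_nonneg_left key (le_of_lt (by positivity : (0:ℝ) < 1 / (2 * θ)))
    have hθne : θ ≠ 0 := ne_of_gt hθ0
    calc (0:ℝ) = 1 / (2 * θ) * 0 := by ring
      _ ≤ 1 / (2 * θ) * (2 * θ * ((∑ t, w t * v t) / T) + θ ^ 2 * normT2 v
          + 2 * lam * θ * D) := this
      _ = (∑ t, w t * v t) / T + lam * D + θ * normT2 v / 2 := by
          field_simp; ring
  have foc : 0 ≤ (∑ t, w t * v t) / T + lam * D :=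
    nonneg_of_small_slack _ _ hnv2 stepA
  -- Step B
  have hA : (0:ℝ) ≤ ∑ t, (v t) ^ 2 := by positivity
  have hsq : normT v ^ 2 = (∑ t, (v t) ^ 2) / T := Real.sq_sqrt (by positivity)
  have hsplit : (∑ t, (v t) ^ 2) = (∑ t, v t * r t) + (∑ t, u t * v t) - (∑ t, w t * v t) := by
    rw [← Finset.sum_add_distrib, ← Finset.sum_sub_distrib]
    refine Finset.sum_congr rfl fun t _ => ?_
    rw [hvsplit t]; ring
  have hB : (0:ℝ) ≤ ∑ t, (r t) ^ 2 := by positivity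
  have hCS : (∑ t, v t * r t) / T ≤ normT v * normT r := by
    have h1 := cs_sum v r
    have hprod : normT v * normT r
        = Real.sqrt (∑ t, (v t) ^ 2) * Real.sqrt (∑ t, (r t) ^ 2) / T := by
      rw [normT, normT, Real.sqrt_div hA, Real.sqrt_div hB, div_mul_div_comm,
        Real.mul_self_sqrt (le_of_lt hT0)]
    rw [hprod]
    exact div_le_div_of_nonneg_right h1 (le_of_lt hT0)
  have hdual' : (∑ t, u t * v t) / T ≤ (lam / c) * sgl α G (βhat - β) := by
    have h2 := hdual (βhat - β)
    calc (∑ t, u t * v t) / T ≤ |∑ t, u t * v t| / T :=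
          div_le_div_of_nonneg_right (le_abs_self _) (le_of_lt hT0)
      _ ≤ (lam / c) * sgl α G (βhat - β) := h2
  have hfin : normT v ^ 2
      = (∑ t, v t * r t) / T + (∑ t, u t * v t) / T - (∑ t, w t * v t) / T := by
    rw [hsq, hsplit]; ring
  have hcoef : (1 / c) * lam * sgl α G (βhat - β) = (lam / c) * sgl α G (βhat - β) := by
    ring
  rw [hfin, hcoef]
  linarith
end
end

section
/- Let β ∈ ℝ^p with support S₀ and group support 𝒢₀, let c₀ > 0, and let Δ ∈ ℝ^p belong to the cone 𝒞(c₀), i.e. Ω₁(Δ) ≤ c₀ Ω₀(Δ). Then the compatibility inequality holds: Ω(Δ) ≤ (1 + c₀) √(s_α) · √(∑_{G∈𝒢₀} |Δ_G|₂²), where √(s_α) = α√|S₀| + (1−α)√|𝒢₀|. -/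
open Finset

noncomputable section

open scoped Classical

/-- Support `S₀ = {j : β_j ≠ 0}` of `β`. -/
def supp {p : ℕ} (β : Fin p → ℝ) : Finset (Fin p) :=
  Finset.univ.filter (fun j => β j ≠ 0)

/-- Group support `𝒢₀ = {G ∈ 𝒢 : β_G ≠ 0}` of `β`. -/
def gsupp {p : ℕ} (G : Finset (Finset (Fin p))) (β : Fin p → ℝ) :
    Finset (Finset (Fin p)) :=
  G.filter (fun g => restr β g ≠ 0)

/-- `Ω₀(b) = α|b_{S₀}|₁ + (1−α)∑_{G∈𝒢₀}|b_G|₂`. -/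
def sgl0 {p : ℕ} (α : ℝ) (G : Finset (Finset (Fin p))) (β b : Fin p → ℝ) : ℝ :=
  α * l1 (restr b (supp β)) + (1 - α) * ∑ g ∈ gsupp G β, l2 (restr b g)

/-- `Ω₁(b) = α|b_{S₀ᶜ}|₁ + (1−α)∑_{G∈𝒢∖𝒢₀}|b_G|₂`. -/
def sgl1 {p : ℕ} (α : ℝ) (G : Finset (Finset (Fin p))) (β b : Fin p → ℝ) : ℝ :=
  α * l1 (restr b (supp β)ᶜ) + (1 - α) * ∑ g ∈ G \ gsupp G β, l2 (restr b g)

/-- Effective sparsity constant `s_α`, defined via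
`√(s_α) = α√|S₀| + (1−α)√|𝒢₀|`. -/
def salpha {p : ℕ} (α : ℝ) (G : Finset (Finset (Fin p))) (β : Fin p → ℝ) : ℝ :=
  (α * Real.sqrt ((supp β).card) + (1 - α) * Real.sqrt ((gsupp G β).card)) ^ 2

lemma cs_aux {ι : Type*} (s : Finset ι) (f : ι → ℝ) (hf : ∀ i ∈ s, 0 ≤ f i) :
    ∑ i ∈ s, f i ≤ Real.sqrt s.card * Real.sqrt (∑ i ∈ s, (f i)^2) := by
  rw [← Real.sqrt_mul (by positivity),
    show ∑ i ∈ s, f i = Real.sqrt ((∑ i ∈ s, f i)^2) from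
      (Real.sqrt_sq (Finset.sum_nonneg hf)).symm]
  apply Real.sqrt_le_sqrt
  calc (∑ i ∈ s, f i)^2 = (∑ i ∈ s, 1 * f i)^2 := by simp
    _ ≤ (∑ i ∈ s, (1:ℝ)^2) * ∑ i ∈ s, (f i)^2 := Finset.sum_mul_sq_le_sq_mul_sq s 1 f
    _ = s.card * ∑ i ∈ s, (f i)^2 := by simp

lemma l1_restr {p : ℕ} (b : Fin p → ℝ) (S : Finset (Fin p)) :
    l1 (restr b S) = ∑ i ∈ S, |b i| := by
  simp [l1, restr, apply_ite abs, Finset.sum_ite_mem]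

lemma l2_restr_sq {p : ℕ} (b : Fin p → ℝ) (S : Finset (Fin p)) :
    (l2 (restr b S))^2 = ∑ i ∈ S, (b i)^2 := by
  rw [l2, Real.sq_sqrt (by positivity)]
  simp [restr, apply_ite (· ^ 2), Finset.sum_ite_mem]

/-- compatibility inequality. If `Δ` lies in the cone
`𝒞(c₀) = {Ω₁(Δ) ≤ c₀Ω₀(Δ)}`, then
`Ω(Δ) ≤ (1+c₀)√(s_α)·√(∑_{G∈𝒢₀}|Δ_G|₂²)` with
`√(s_α) = α√|S₀| + (1−α)√|𝒢₀|`. -/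
theorem sgLasso_compatibility
    (p : ℕ) (hp : 1 ≤ p) (α : ℝ) (hα0 : 0 ≤ α) (hα1 : α ≤ 1)
    (G : Finset (Finset (Fin p))) (hG : IsPartition G)
    (β : Fin p → ℝ) (c0 : ℝ) (hc0 : 0 < c0) (Δ : Fin p → ℝ)
    (hcone : sgl1 α G β Δ ≤ c0 * sgl0 α G β Δ) :
    sgl α G Δ ≤
      (1 + c0) *
        (α * Real.sqrt ((supp β).card) + (1 - α) * Real.sqrt ((gsupp G β).card)) *
          Real.sqrt (∑ g ∈ gsupp G β, (l2 (restr Δ g)) ^ 2) := by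
  set Q : ℝ := α * Real.sqrt ((supp β).card) + (1 - α) * Real.sqrt ((gsupp G β).card)
  set R : ℝ := Real.sqrt (∑ g ∈ gsupp G β, (l2 (restr Δ g)) ^ 2)
  have hR : 0 ≤ R := Real.sqrt_nonneg _
  -- sgl = sgl0 + sgl1
  have hsplit : sgl α G Δ = sgl0 α G β Δ + sgl1 α G β Δ := by
    have h1 : l1 Δ = l1 (restr Δ (supp β)) + l1 (restr Δ (supp β)ᶜ) := by
      rw [l1_restr, l1_restr, l1]
      exact (Finset.sum_add_sum_compl (supp β) _).symm
    have h2 : ∑ g ∈ G, l2 (restr Δ g) =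
        (∑ g ∈ gsupp G β, l2 (restr Δ g)) + ∑ g ∈ G \ gsupp G β, l2 (restr Δ g) := by
      rw [add_comm]
      exact (Finset.sum_sdiff (show gsupp G β ⊆ G from Finset.filter_subset _ _)).symm
    simp only [sgl, sgl0, sgl1, h1, h2]; ring
  -- key bound: sgl0 ≤ Q * R
  have hsum_sq : ∀ g ∈ gsupp G β, (l2 (restr Δ g))^2 = ∑ i ∈ g, (Δ i)^2 :=
    fun g _ => l2_restr_sq Δ g
  have hsubset : supp β ⊆ (gsupp G β).biUnion id := by
    intro i hi
    simp only [supp, Finset.mem_filter] at hi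
    obtain ⟨g, hgG, hig⟩ := hG.2.2 i
    refine Finset.mem_biUnion.2 ⟨g, ?_, hig⟩
    simp only [gsupp, Finset.mem_filter]
    refine ⟨hgG, fun h => hi.2 ?_⟩
    have := congrFun h i
    simpa [restr, hig] using this
  have hdisj : ∀ x ∈ gsupp G β, ∀ y ∈ gsupp G β, x ≠ y → Disjoint (id x) (id y) := by
    intro x hx y hy hxy
    exact hG.2.1 x (Finset.mem_of_mem_filter x hx) y (Finset.mem_of_mem_filter y hy) hxy
  have hl2sumS : ∑ i ∈ supp β, (Δ i)^2 ≤ ∑ g ∈ gsupp G β, (l2 (restr Δ g))^2 := by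
    rw [Finset.sum_congr rfl hsum_sq]
    calc ∑ i ∈ supp β, (Δ i)^2
        ≤ ∑ i ∈ (gsupp G β).biUnion id, (Δ i)^2 :=
          Finset.sum_le_sum_of_subset_of_nonneg hsubset (fun i _ _ => sq_nonneg _)
      _ = ∑ g ∈ gsupp G β, ∑ i ∈ g, (Δ i)^2 := Finset.sum_biUnion hdisj
  have hA : l1 (restr Δ (supp β)) ≤ Real.sqrt ((supp β).card) * R := by
    rw [l1_restr]
    calc ∑ i ∈ supp β, |Δ i|
        ≤ Real.sqrt ((supp β).card) * Real.sqrt (∑ i ∈ supp β, |Δ i|^2) :=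
          cs_aux _ _ (fun i _ => abs_nonneg _)
      _ ≤ Real.sqrt ((supp β).card) * R := by
          apply mul_le_mul_of_nonneg_left _ (Real.sqrt_nonneg _)
          apply Real.sqrt_le_sqrt
          simpa [sq_abs] using hl2sumS
  have hB : ∑ g ∈ gsupp G β, l2 (restr Δ g) ≤ Real.sqrt ((gsupp G β).card) * R :=
    cs_aux _ _ (fun g _ => Real.sqrt_nonneg _)
  have h0 : sgl0 α G β Δ ≤ Q * R := by
    have := mul_le_mul_of_nonneg_left hA hα0
    have := mul_le_mul_of_nonneg_left hB (by linarith : (0:ℝ) ≤ 1 - α)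
    simp only [sgl0, Q, add_mul]
    nlinarith [mul_le_mul_of_nonneg_left hA hα0,
      mul_le_mul_of_nonneg_left hB (by linarith : (0:ℝ) ≤ 1 - α)]
  have : sgl α G Δ ≤ (1 + c0) * sgl0 α G β Δ := by rw [hsplit]; nlinarith
  calc sgl α G Δ ≤ (1 + c0) * sgl0 α G β Δ := this
    _ ≤ (1 + c0) * (Q * R) := by
        apply mul_le_mul_of_nonneg_left h0 (by linarith)
    _ = (1 + c0) * Q * R := by ring
end
end
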